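/- Let X be a random d×d real symmetric matrix with X ⪯ I almost surely and E[X] = 0. Then E[exp(X)] ⪯ I + E[X²]. -/

import Mathlib

/-!
The scalar inequality `exp x ≤ 1 + x + x ^ 2` for `x ≤ 1` lifts, through the continuous
functional calculus, to `exp A ⪯ 1 + A + A ^ 2` for every Hermitian `A ⪯ 1`. Taking expectations
preserves the Loewner order because a quadratic form of the entrywise expectation is the
expectation of the quadratic form; finally `E[X] = 0` removes the linear term.
-/

open MeasureTheory
-- The `L2Operator` norm makes matrices a C⋆-algebra; it induces the product topology, so
-- `NormedSpace.exp` is the same as without it.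
open scoped MatrixOrder Matrix.Norms.L2Operator

theorem Real.exp_le_one_add_add_sq {x : ℝ} (hx : x ≤ 1) : Real.exp x ≤ 1 + x + x ^ 2 := by
  rcases le_or_gt x 0 with hneg | hpos
  · -- `exp x * (1 - x) ≤ exp x * exp (-x) = 1 ≤ 1 - x ^ 3 = (1 + x + x ^ 2) * (1 - x)`
    have hinv : Real.exp x * Real.exp (-x) = 1 := by
      rw [← Real.exp_add, add_neg_cancel, Real.exp_zero]
    nlinarith [Real.add_one_le_exp (-x), Real.exp_pos x]
  · have htaylor := Real.exp_bound' hpos.le hx (n := 3) (by norm_num)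
    norm_num [Finset.sum_range_succ, Nat.factorial] at htaylor
    nlinarith

theorem NormedSpace.exp_le_one_add_add_sq {A : Type*} [NormedRing A] [StarRing A]
    [NormedAlgebra ℝ A] [PartialOrder A] [StarOrderedRing A]
    [ContinuousFunctionalCalculus ℝ A IsSelfAdjoint] [NonnegSpectrumClass ℝ A] {a : A}
    (h : a ≤ 1) : NormedSpace.exp a ≤ 1 + a + a ^ 2 := by
  have ha : IsSelfAdjoint a := by
    simpa using (IsSelfAdjoint.one A).sub (IsSelfAdjoint.of_nonneg (sub_nonneg.mpr h))
  have hspec : ∀ x ∈ spectrum ℝ a, x ≤ 1 := by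
    rw [← le_algebraMap_iff_spectrum_le ha]; simpa using h
  calc NormedSpace.exp a = cfc Real.exp a := (CFC.real_exp_eq_normedSpace_exp ha).symm
    _ ≤ cfc (fun x => 1 + x + x ^ 2) a :=
      cfc_mono fun x hx => Real.exp_le_one_add_add_sq (hspec x hx)
    _ = 1 + a + a ^ 2 := by rw [cfc_add .., cfc_add .., cfc_const_one .., cfc_id' .., cfc_pow_id ..]

theorem Matrix.PosSemidef.one_add_add_sq_sub_exp {n : Type*} [Fintype n] [DecidableEq n]
    {A : Matrix n n ℝ} (h : (1 - A).PosSemidef) :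
    (1 + A + A ^ 2 - NormedSpace.exp A).PosSemidef := by
  rw [← Matrix.nonneg_iff_posSemidef, sub_nonneg]
  exact NormedSpace.exp_le_one_add_add_sq (Matrix.le_iff.mpr h)

namespace Matrix

variable {m n Ω : Type*} [MeasurableSpace Ω] {μ : Measure Ω}

noncomputable def entrywiseIntegral {E : Type*} [NormedAddCommGroup E] [NormedSpace ℝ E]
    (μ : Measure Ω) (M : Ω → Matrix m n E) : Matrix m n E :=
  of fun i j => ∫ ω, M ω i j ∂μ

section

variable {E : Type*} [NormedAddCommGroup E] [NormedSpace ℝ E] {M N : Ω → Matrix m n E}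

theorem entrywiseIntegral_add (hM : ∀ i j, Integrable (fun ω => M ω i j) μ)
    (hN : ∀ i j, Integrable (fun ω => N ω i j) μ) :
    entrywiseIntegral μ (fun ω => M ω + N ω) = entrywiseIntegral μ M + entrywiseIntegral μ N := by
  ext i j; exact integral_add (hM i j) (hN i j)

theorem entrywiseIntegral_sub (hM : ∀ i j, Integrable (fun ω => M ω i j) μ)
    (hN : ∀ i j, Integrable (fun ω => N ω i j) μ) :
    entrywiseIntegral μ (fun ω => M ω - N ω) = entrywiseIntegral μ M - entrywiseIntegral μ N := by
  ext i j; exact integral_sub (hM i j) (hN i j)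

theorem entrywiseIntegral_const [CompleteSpace E] [IsProbabilityMeasure μ] (A : Matrix m n E) :
    entrywiseIntegral μ (fun _ => A) = A := by
  ext i j; exact (integral_const _).trans (by simp)

end

theorem dotProduct_entrywiseIntegral_mulVec [Fintype m] [Fintype n] {M : Ω → Matrix m n ℝ}
    (hM : ∀ i j, Integrable (fun ω => M ω i j) μ) (x : m → ℝ) (y : n → ℝ) :
    x ⬝ᵥ entrywiseIntegral μ M *ᵥ y = ∫ ω, x ⬝ᵥ M ω *ᵥ y ∂μ := by
  simp only [dotProduct, mulVec, entrywiseIntegral, of_apply, Finset.mul_sum]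
  rw [integral_finsetSum _ fun i _ => integrable_finsetSum _ fun j _ =>
    ((hM i j).mul_const (y j)).const_mul (x i)]
  refine Finset.sum_congr rfl fun i _ => ?_
  rw [integral_finsetSum _ fun j _ => ((hM i j).mul_const (y j)).const_mul (x i)]
  simp only [integral_const_mul, integral_mul_const]

theorem PosSemidef.entrywiseIntegral [Fintype n] {M : Ω → Matrix n n ℝ}
    (hM : ∀ i j, Integrable (fun ω => M ω i j) μ) (hpsd : ∀ᵐ ω ∂μ, (M ω).PosSemidef) :
    (entrywiseIntegral μ M).PosSemidef := by
  refine .of_dotProduct_mulVec_nonneg ?_ fun x => ?_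
  · ext i j
    refine integral_congr_ae ?_
    filter_upwards [hpsd] with ω hω
    exact congrFun₂ hω.isHermitian i j
  · rw [dotProduct_entrywiseIntegral_mulVec hM]
    refine integral_nonneg_of_ae ?_
    filter_upwards [hpsd] with ω hω
    exact hω.dotProduct_mulVec_nonneg x

end Matrix

theorem expectation_matrix_exp_le_general
    {d : ℕ} {Ω : Type*} [MeasurableSpace Ω] (μ : Measure Ω) [IsProbabilityMeasure μ]
    (X : Ω → Matrix (Fin d) (Fin d) ℝ)
    (hle : ∀ᵐ ω ∂μ, ((1 : Matrix (Fin d) (Fin d) ℝ) - X ω).PosSemidef)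
    (hIntX : ∀ a b, Integrable (fun ω => X ω a b) μ)
    (hmean : ∀ a b, ∫ ω, X ω a b ∂μ = 0)
    (hIntExp : ∀ a b, Integrable (fun ω => NormedSpace.exp (X ω) a b) μ)
    (hIntSq : ∀ a b, Integrable (fun ω => (X ω ^ 2) a b) μ) :
    ((1 + (Matrix.of fun a b => ∫ ω, (X ω ^ 2) a b ∂μ))
      - (Matrix.of fun a b => ∫ ω, NormedSpace.exp (X ω) a b ∂μ)).PosSemidef := by
  have hInt1 : ∀ a b, Integrable (fun _ : Ω => (1 : Matrix (Fin d) (Fin d) ℝ) a b) μ :=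
    fun _ _ => integrable_const _
  have hIntLin : ∀ a b, Integrable (fun ω => (1 + X ω : Matrix (Fin d) (Fin d) ℝ) a b) μ :=
    fun a b => (hInt1 a b).add (hIntX a b)
  have hIntQuad :
      ∀ a b, Integrable (fun ω => (1 + X ω + X ω ^ 2 : Matrix (Fin d) (Fin d) ℝ) a b) μ :=
    fun a b => (hIntLin a b).add (hIntSq a b)
  have hpsd : (Matrix.entrywiseIntegral μ fun ω =>
      1 + X ω + X ω ^ 2 - NormedSpace.exp (X ω)).PosSemidef :=
    .entrywiseIntegral (fun a b => (hIntQuad a b).sub (hIntExp a b))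
      (hle.mono fun _ => Matrix.PosSemidef.one_add_add_sq_sub_exp)
  have hEX : Matrix.entrywiseIntegral μ X = 0 := Matrix.ext hmean
  rwa [Matrix.entrywiseIntegral_sub hIntQuad hIntExp, Matrix.entrywiseIntegral_add hIntLin hIntSq,
    Matrix.entrywiseIntegral_add hInt1 hIntX, Matrix.entrywiseIntegral_const, hEX, add_zero] at hpsd

/-- For a random real symmetric matrix `X` with `X ⪯ I` almost surely and `E[X] = 0`,
we have `E[exp(X)] ⪯ I + E[X²]` (Loewner order; expectations taken entrywise). -/
theorem expectation_matrix_exp_le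
    {d : ℕ} {Ω : Type*} [MeasurableSpace Ω] (μ : Measure Ω) [IsProbabilityMeasure μ]
    (X : Ω → Matrix (Fin d) (Fin d) ℝ)
    (hmeas : ∀ a b, Measurable fun ω => X ω a b)
    (hsym : ∀ ω, (X ω).IsHermitian)
    (hle : ∀ᵐ ω ∂μ, ((1 : Matrix (Fin d) (Fin d) ℝ) - X ω).PosSemidef)
    (hIntX : ∀ a b, Integrable (fun ω => X ω a b) μ)
    (hmean : ∀ a b, ∫ ω, X ω a b ∂μ = 0)
    (hIntExp : ∀ a b, Integrable (fun ω => NormedSpace.exp (X ω) a b) μ)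
    (hIntSq : ∀ a b, Integrable (fun ω => (X ω ^ 2) a b) μ) :
    ((1 + (Matrix.of fun a b => ∫ ω, (X ω ^ 2) a b ∂μ))
      - (Matrix.of fun a b => ∫ ω, NormedSpace.exp (X ω) a b ∂μ)).PosSemidef :=
  expectation_matrix_exp_le_general μ X hle hIntX hmean hIntExp hIntSq
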